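/- arXiv:2107.08675 — 3 statements merged into one kernel-verified Lean document; each statement's English description precedes it below -/
import Mathlib

section
/- In the real inner product space ℝ^d, any family of unit vectors whose pairwise inner products are all nonpositive has cardinality at most 2d. -/
/-!
Induct on the dimension. Fix a vector `u` of the family and project the others onto `uᗮ`:
since `⟪P v, P w⟫ = ⟪v, w⟫ - ⟪u, v⟫ ⟪u, w⟫ / ‖u‖²`, the projections still have pairwise
nonpositive inner products, and those of the vectors off the line `ℝ u` are nonzero, so there are
at most `2 (d - 1)` of them. On the line `ℝ u` itself there is room for at most two vectors, one on
each side of the origin.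
-/

open RealInnerProductSpace Module

section

variable {E : Type*} [NormedAddCommGroup E] [InnerProductSpace ℝ E]

theorem real_inner_starProjection_orthogonal_span_singleton (u v w : E) :
    ⟪(ℝ ∙ u)ᗮ.starProjection v, (ℝ ∙ u)ᗮ.starProjection w⟫ =
      ⟪v, w⟫ - ⟪u, v⟫ * ⟪u, w⟫ / ‖u‖ ^ 2 := by
  rw [Submodule.inner_starProjection_left_eq_right,
    Submodule.starProjection_eq_self_iff.mpr (Submodule.starProjection_apply_mem _ w),
    Submodule.starProjection_orthogonal_val, Submodule.starProjection_singleton,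
    inner_sub_right, real_inner_smul_right, real_inner_comm v u, RCLike.ofReal_real_eq_id, id]
  ring

theorem real_inner_eq_of_mem_span_singleton {u x : E} (hx : x ∈ ℝ ∙ u) (y : E) :
    ⟪x, y⟫ = ⟪u, x⟫ * ⟪u, y⟫ / ‖u‖ ^ 2 := by
  have hPx : (ℝ ∙ u)ᗮ.starProjection x = 0 := by
    rwa [Submodule.starProjection_apply_eq_zero_iff, Submodule.orthogonal_orthogonal]
  have h := real_inner_starProjection_orthogonal_span_singleton u x y
  rw [hPx, inner_zero_left] at h
  linarith

theorem real_inner_starProjection_orthogonal_span_singleton_nonpos {u v w : E}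
    (huv : ⟪u, v⟫ ≤ 0) (huw : ⟪u, w⟫ ≤ 0) (hvw : ⟪v, w⟫ ≤ 0) :
    ⟪(ℝ ∙ u)ᗮ.starProjection v, (ℝ ∙ u)ᗮ.starProjection w⟫ ≤ 0 := by
  have : 0 ≤ ⟪u, v⟫ * ⟪u, w⟫ / ‖u‖ ^ 2 :=
    div_nonneg (mul_nonneg_of_nonpos_of_nonpos huv huw) (by positivity)
  rw [real_inner_starProjection_orthogonal_span_singleton]
  linarith

variable {ι : Type*}

theorem card_mem_span_singleton_le_two_of_pairwise_inner_nonpos [Finite ι] {v : ι → E}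
    (hv : ∀ i, v i ≠ 0) (hvv : Pairwise fun i j ↦ ⟪v i, v j⟫ ≤ 0) (u : E) :
    Nat.card {i // v i ∈ ℝ ∙ u} ≤ 2 := by
  have hne (i : {i // v i ∈ ℝ ∙ u}) : ⟪u, v i⟫ ≠ 0 := by
    intro h
    have hvi := real_inner_eq_of_mem_span_singleton i.2 (v i)
    rw [h, zero_mul, zero_div, inner_self_eq_zero] at hvi
    exact hv i hvi
  have hsign : Function.Injective fun i : {i // v i ∈ ℝ ∙ u} ↦ decide (0 < ⟪u, v i⟫) := by
    intro i j hij
    by_contra hij'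
    have hpos : 0 < ⟪u, v i⟫ * ⟪u, v j⟫ := by
      have := hne i
      have := hne j
      simp only [decide_eq_decide] at hij
      grind [mul_pos, mul_pos_of_neg_of_neg]
    have hu : u ≠ 0 := by rintro rfl; exact hne i (inner_zero_left _)
    have hvij : ⟪v i, v j⟫ ≤ 0 := hvv (Subtype.coe_injective.ne hij')
    rw [real_inner_eq_of_mem_span_singleton i.2] at hvij
    exact hvij.not_gt (by positivity)
  simpa using Nat.card_le_card_of_injective _ hsign

theorem card_le_two_mul_finrank_of_pairwise_inner_nonpos [Fintype ι] [FiniteDimensional ℝ E]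
    {v : ι → E} (hv : ∀ i, v i ≠ 0) (hvv : Pairwise fun i j ↦ ⟪v i, v j⟫ ≤ 0) :
    Fintype.card ι ≤ 2 * finrank ℝ E := by
  classical
  induction hn : finrank ℝ E generalizing ι E with
  | zero =>
    have : IsEmpty ι := ⟨fun i ↦ hv i (finrank_zero_iff_forall_zero.mp hn _)⟩
    simp
  | succ n ih =>
    rcases isEmpty_or_nonempty ι with hι | ⟨⟨i₀⟩⟩
    · simp
    set u := v i₀
    set K := (ℝ ∙ u)ᗮ
    have hK : finrank ℝ K = n := by
      have : Fact (finrank ℝ E = n + 1) := ⟨hn⟩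
      exact Submodule.finrank_orthogonal_span_singleton (hv i₀)
    have hoff : Fintype.card {i // v i ∉ ℝ ∙ u} ≤ 2 * n := by
      refine ih (v := fun i ↦ K.orthogonalProjectionOnto (v i)) (fun i ↦ ?_) (fun i j hij ↦ ?_) hK
      · rw [ne_eq, Submodule.orthogonalProjectionOnto_eq_zero_iff, Submodule.orthogonal_orthogonal]
        exact i.2
      · have hne (i : {i // v i ∉ ℝ ∙ u}) : i₀ ≠ i :=
          fun h ↦ i.2 (h ▸ Submodule.mem_span_singleton_self u)
        show ⟪(K.orthogonalProjectionOnto (v i) : E), K.orthogonalProjectionOnto (v j)⟫ ≤ 0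
        exact real_inner_starProjection_orthogonal_span_singleton_nonpos (hvv (hne i))
          (hvv (hne j)) (hvv (Subtype.coe_injective.ne hij))
    have hon := card_mem_span_singleton_le_two_of_pairwise_inner_nonpos hv hvv u
    rw [Nat.card_eq_fintype_card] at hon
    have hsplit := Fintype.card_subtype_compl (fun i ↦ v i ∈ ℝ ∙ u)
    have := Fintype.card_subtype_le (fun i ↦ v i ∈ ℝ ∙ u)
    omega

end

theorem unit_vectors_pairwise_nonpos_inner_card_le_general
    (d : ℕ) (S : Finset (EuclideanSpace ℝ (Fin d)))
    (hunit : ∀ v ∈ S, ‖v‖ = 1)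
    (hip : ∀ u ∈ S, ∀ v ∈ S, u ≠ v → ⟪u, v⟫ ≤ 0) :
    S.card ≤ 2 * d := by
  have h := card_le_two_mul_finrank_of_pairwise_inner_nonpos
    (v := ((↑) : S → EuclideanSpace ℝ (Fin d)))
    (fun v ↦ norm_ne_zero_iff.mp (by rw [hunit v v.2]; exact one_ne_zero))
    (fun u v huv ↦ hip u u.2 v v.2 (Subtype.coe_injective.ne huv))
  simpa using h

/-- In ℝ^d, any finite family of unit vectors whose pairwise inner products are
all nonpositive has cardinality at most `2 * d`. -/
theorem unit_vectors_pairwise_nonpos_inner_card_le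
    (d : ℕ) (hd : 0 < d) (S : Finset (EuclideanSpace ℝ (Fin d)))
    (hunit : ∀ v ∈ S, ‖v‖ = 1)
    (hip : ∀ u ∈ S, ∀ v ∈ S, u ≠ v → ⟪u, v⟫ ≤ 0) :
    S.card ≤ 2 * d :=
  unit_vectors_pairwise_nonpos_inner_card_le_general d S hunit hip
end

section
/- The matrix E1 (with entries E1[1,4]=E1[4,1]=E1[2,3]=E1[3,2]=1/2, E1[2,2]=E1[3,3]=1, others zero) satisfies Tr(E1 σ) ≥ 0 for every separable state σ on ℂ²⊗ℂ², but E1 is not positive semidefinite. -/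
open Matrix Kronecker ComplexOrder

noncomputable section

def kron2 (A B : Matrix (Fin 2) (Fin 2) ℂ) : Matrix (Fin 4) (Fin 4) ℂ :=
  Matrix.reindex finProdFinEquiv finProdFinEquiv (A ⊗ₖ B)

/-- A 2×2 density matrix: positive semidefinite with unit trace. -/
def IsDensity (ρ : Matrix (Fin 2) (Fin 2) ℂ) : Prop := ρ.PosSemidef ∧ ρ.trace = 1

/-- A separable state on ℂ²⊗ℂ²: a finite convex combination of product states. -/
def IsSepState (σ : Matrix (Fin 4) (Fin 4) ℂ) : Prop :=
  ∃ (k : ℕ) (p : Fin k → ℝ) (A B : Fin k → Matrix (Fin 2) (Fin 2) ℂ),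
    (∀ i, 0 ≤ p i) ∧ (∑ i, p i = 1) ∧ (∀ i, IsDensity (A i)) ∧ (∀ i, IsDensity (B i)) ∧
    σ = ∑ i, ((p i : ℂ)) • kron2 (A i) (B i)

def E1 : Matrix (Fin 4) (Fin 4) ℂ :=
  !![0, 0, 0, 1/2;
     0, 1, 1/2, 0;
     0, 1/2, 1, 0;
     1/2, 0, 0, 0]

/-!
`E1` is a decomposable witness: with `ψ = e₀ ⊗ e₁ + e₁ ⊗ e₀` and `P = ½ ψψ†`, one has
`E1 = P + Pᵀᴮ` (partial transpose on the second factor). For positive semidefinite `A`, `B`,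
`Tr (Pᵀᴮ (A ⊗ B)) = Tr (P (A ⊗ Bᵀ))`, and both `A ⊗ B` and `A ⊗ Bᵀ` are positive semidefinite,
so `Tr (E1 (A ⊗ B)) ≥ 0`; by linearity this extends to separable states. On the other hand
`E1` is not positive semidefinite, since `v = e₀₀ - e₁₁` gives `v† E1 v = -1`.
-/

namespace Matrix

variable {m n : Type*} [Fintype m] [Fintype n]

def partialTranspose {R : Type*} (M : Matrix (m × n) (m × n) R) : Matrix (m × n) (m × n) R :=
  fun p q => M (p.1, q.2) (q.1, p.2)

theorem trace_partialTranspose_mul_kronecker {R : Type*} [CommSemiring R]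
    (M : Matrix (m × n) (m × n) R) (A : Matrix m m R) (B : Matrix n n R) :
    (partialTranspose M * (A ⊗ₖ B)).trace = (M * (A ⊗ₖ Bᵀ)).trace := by
  simp only [trace, diag_apply, mul_apply, partialTranspose, kroneckerMap_apply, transpose_apply,
    Fintype.sum_prod_type]
  refine Finset.sum_congr rfl fun i _ => ?_
  rw [Finset.sum_comm]
  exact (Finset.sum_congr rfl fun k _ => Finset.sum_comm).trans Finset.sum_comm

theorem trace_submatrix_equiv {R : Type*} [AddCommMonoid R] (M : Matrix m m R) (e : n ≃ m) :
    (M.submatrix e e).trace = M.trace :=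
  e.sum_comp M.diag

variable {𝕜 : Type*} [RCLike 𝕜]

open scoped MatrixOrder in
theorem PosSemidef.trace_mul_nonneg {P X : Matrix n n 𝕜} (hP : P.PosSemidef)
    (hX : X.PosSemidef) : 0 ≤ (P * X).trace := by
  classical
  obtain ⟨a, rfl⟩ := CStarAlgebra.nonneg_iff_eq_star_mul_self.mp hP.nonneg
  rw [mul_assoc, trace_mul_comm, mul_assoc]
  simpa [star_eq_conjTranspose, mul_assoc] using (hX.mul_mul_conjTranspose_same a).trace_nonneg

theorem trace_add_partialTranspose_mul_kronecker_nonneg {P Q : Matrix (m × n) (m × n) 𝕜}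
    (hP : P.PosSemidef) (hQ : Q.PosSemidef) {A : Matrix m m 𝕜} {B : Matrix n n 𝕜}
    (hA : A.PosSemidef) (hB : B.PosSemidef) :
    0 ≤ ((P + partialTranspose Q) * (A ⊗ₖ B)).trace := by
  rw [add_mul, trace_add, trace_partialTranspose_mul_kronecker]
  exact add_nonneg (hP.trace_mul_nonneg (hA.kronecker hB))
    (hQ.trace_mul_nonneg (hA.kronecker hB.transpose))

end Matrix

theorem trace_mul_nonneg_of_isSepState {W σ : Matrix (Fin 4) (Fin 4) ℂ}
    (hW : ∀ A B, A.PosSemidef → B.PosSemidef → 0 ≤ (W * kron2 A B).trace)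
    (hσ : IsSepState σ) : 0 ≤ (W * σ).trace := by
  obtain ⟨k, p, A, B, hp, -, hA, hB, rfl⟩ := hσ
  rw [Finset.mul_sum, trace_sum]
  refine Finset.sum_nonneg fun i _ => ?_
  rw [Matrix.mul_smul, trace_smul, smul_eq_mul]
  exact mul_nonneg (Complex.zero_le_real.mpr (hp i)) (hW _ _ (hA i).1 (hB i).1)

theorem trace_reindex_mul_kron2 (W : Matrix (Fin 2 × Fin 2) (Fin 2 × Fin 2) ℂ)
    (A B : Matrix (Fin 2) (Fin 2) ℂ) :
    (reindex finProdFinEquiv finProdFinEquiv W * kron2 A B).trace = (W * (A ⊗ₖ B)).trace := by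
  rw [kron2, reindex_apply, reindex_apply, submatrix_mul_equiv, trace_submatrix_equiv]

def psiPlus : Fin 2 × Fin 2 → ℂ := fun p => if p.1 = p.2 then 0 else 1

def bellProjector : Matrix (Fin 2 × Fin 2) (Fin 2 × Fin 2) ℂ :=
  (2⁻¹ : ℂ) • vecMulVec psiPlus (star psiPlus)

theorem bellProjector_posSemidef : bellProjector.PosSemidef :=
  (posSemidef_vecMulVec_self_star psiPlus).smul (inv_nonneg.mpr zero_le_two)

theorem E1_eq_reindex_bellProjector_add_partialTranspose :
    E1 = reindex finProdFinEquiv finProdFinEquiv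
      (bellProjector + partialTranspose bellProjector) := by
  ext i j
  fin_cases i <;> fin_cases j <;>
    simp +decide [E1, bellProjector, psiPlus, partialTranspose, vecMulVec] <;> norm_num

theorem E1_trace_mul_kron2_nonneg {A B : Matrix (Fin 2) (Fin 2) ℂ} (hA : A.PosSemidef)
    (hB : B.PosSemidef) : 0 ≤ (E1 * kron2 A B).trace := by
  rw [E1_eq_reindex_bellProjector_add_partialTranspose, trace_reindex_mul_kron2]
  exact trace_add_partialTranspose_mul_kronecker_nonneg bellProjector_posSemidef
    bellProjector_posSemidef hA hB

/-- `E1` yields nonnegative trace on every separable state, yet `E1` is not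
positive semidefinite (there is a vector with `⟨v, E1 v⟩ < 0`). -/
theorem E1_positive_on_separables_but_not_posSemidef :
    (∀ σ : Matrix (Fin 4) (Fin 4) ℂ, IsSepState σ → 0 ≤ (E1 * σ).trace) ∧
    (∃ v : Fin 4 → ℂ, (star v ⬝ᵥ E1.mulVec v).re < 0) ∧ ¬ E1.PosSemidef := by
  have hv : (star ![1, 0, 0, -1] ⬝ᵥ E1 *ᵥ ![1, 0, 0, -1] : ℂ).re < 0 := by
    simp [dotProduct, mulVec, Fin.sum_univ_four, E1]
  exact ⟨fun σ => trace_mul_nonneg_of_isSepState fun A B => E1_trace_mul_kron2_nonneg,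
    ⟨_, hv⟩, fun h => (h.re_dotProduct_nonneg _).not_gt hv⟩

end
end

section
/- At most 12 pure product states of two qubits can be pairwise perfectly distinguished in the minimal tensor product (SEP) theory: any set of pairs of unit Bloch vectors (nᵢ, mᵢ) ∈ ℝ³×ℝ³ with nᵢ·nⱼ + mᵢ·mⱼ ≤ 0 for all i ≠ j has cardinality at most 12. -/
open RealInnerProductSpace Module Finset

/-!
Send a pair `(n, m)` to the vector `n ⊕ m` of the `L²` product `ℝ³ × ℝ³ ≅ ℝ⁶`. The condition
becomes that the family consists of nonzero vectors with pairwise nonpositive inner products,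
and such a family in a space of dimension `d` has at most `2d` members.

The bound `2d` goes by induction on `d`. Remove one member `v₀` and project the others onto
`v₀ᗮ`. Since `⟪u, v⟫ = ⟪P u, P v⟫ + ⟪v₀, u⟫ ⟪v₀, v⟫ / ‖v₀‖²` and both `⟪v₀, u⟫` and `⟪v₀, v⟫` are
nonpositive, projecting does not increase inner products. So at most one member is sent to `0`
(two negative multiples of `v₀` have positive inner product), and on the remaining members the
projection is injective, giving a nonzero pairwise obtuse family in dimension `d - 1`.
-/

section

variable {E : Type*} [NormedAddCommGroup E] [InnerProductSpace ℝ E]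

theorem inner_eq_inner_orthogonalProjectionOnto_singleton_add (v₀ u v : E) :
    ⟪u, v⟫ = ⟪(ℝ ∙ v₀)ᗮ.orthogonalProjectionOnto u, (ℝ ∙ v₀)ᗮ.orthogonalProjectionOnto v⟫ +
      ⟪v₀, u⟫ * ⟪v₀, v⟫ / ‖v₀‖ ^ 2 := by
  rw [Submodule.coe_inner]
  rcases eq_or_ne v₀ 0 with rfl | hv₀
  · simp [Submodule.starProjection_top]
  simp only [← Submodule.starProjection_apply, Submodule.starProjection_orthogonal_val,
    Submodule.starProjection_singleton, RCLike.ofReal_real_eq_id, id, inner_sub_left,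
    inner_sub_right, real_inner_smul_left, real_inner_smul_right, real_inner_self_eq_norm_sq,
    real_inner_comm u v₀, real_inner_comm v v₀]
  have : ‖v₀‖ ≠ 0 := norm_ne_zero_iff.mpr hv₀
  field_simp
  ring

theorem inner_orthogonalProjectionOnto_singleton_le {v₀ u v : E} (hu : ⟪v₀, u⟫ ≤ 0)
    (hv : ⟪v₀, v⟫ ≤ 0) :
    ⟪(ℝ ∙ v₀)ᗮ.orthogonalProjectionOnto u, (ℝ ∙ v₀)ᗮ.orthogonalProjectionOnto v⟫ ≤ ⟪u, v⟫ := by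
  rw [inner_eq_inner_orthogonalProjectionOnto_singleton_add v₀ u v, le_add_iff_nonneg_right]
  exact div_nonneg (mul_nonneg_of_nonpos_of_nonpos hu hv) (by positivity)

theorem inner_neg_of_orthogonalProjectionOnto_singleton_eq_zero {v₀ u : E} (hu₀ : u ≠ 0)
    (hu : ⟪v₀, u⟫ ≤ 0) (hPu : (ℝ ∙ v₀)ᗮ.orthogonalProjectionOnto u = 0) : ⟪v₀, u⟫ < 0 := by
  refine hu.lt_of_ne fun h ↦ hu₀ ?_
  simpa [hPu, h] using inner_eq_inner_orthogonalProjectionOnto_singleton_add v₀ u u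

theorem inner_pos_of_orthogonalProjectionOnto_singleton_eq_zero {v₀ u v : E} (hu₀ : u ≠ 0)
    (hv₀ : v ≠ 0) (hu : ⟪v₀, u⟫ ≤ 0) (hv : ⟪v₀, v⟫ ≤ 0)
    (hPu : (ℝ ∙ v₀)ᗮ.orthogonalProjectionOnto u = 0)
    (hPv : (ℝ ∙ v₀)ᗮ.orthogonalProjectionOnto v = 0) : 0 < ⟪u, v⟫ := by
  have hu' := inner_neg_of_orthogonalProjectionOnto_singleton_eq_zero hu₀ hu hPu
  have hv' := inner_neg_of_orthogonalProjectionOnto_singleton_eq_zero hv₀ hv hPv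
  have : v₀ ≠ 0 := by rintro rfl; simp at hu'
  rw [inner_eq_inner_orthogonalProjectionOnto_singleton_add v₀ u v, hPu, hPv, inner_zero_left,
    zero_add]
  exact div_pos (mul_pos_of_neg_of_neg hu' hv') (by positivity)

theorem Set.Pairwise.inner_orthogonalProjectionOnto_singleton_nonpos {v₀ : E} {s : Set E}
    (hs : s.Pairwise fun u v ↦ ⟪u, v⟫ ≤ 0) (hv₀s : ∀ v ∈ s, ⟪v₀, v⟫ ≤ 0) :
    s.Pairwise fun u v ↦
      ⟪(ℝ ∙ v₀)ᗮ.orthogonalProjectionOnto u, (ℝ ∙ v₀)ᗮ.orthogonalProjectionOnto v⟫ ≤ 0 :=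
  fun u hu v hv huv ↦
    (inner_orthogonalProjectionOnto_singleton_le (hv₀s u hu) (hv₀s v hv)).trans (hs hu hv huv)

theorem Set.Pairwise.injOn_of_inner_nonpos {α : Type*} {f : α → E} {s : Set α}
    (hs : s.Pairwise fun a b ↦ ⟪f a, f b⟫ ≤ 0) (hf : ∀ a ∈ s, f a ≠ 0) : s.InjOn f :=
  fun a ha _ hb hab ↦ by_contra fun hne ↦ hf a ha <|
    real_inner_self_nonpos.mp <| (congrArg (⟪f a, ·⟫) hab).trans_le (hs ha hb hne)

theorem Finset.card_filter_orthogonalProjectionOnto_singleton_eq_zero_le_one [DecidableEq E]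
    {v₀ : E} {T : Finset E} (hT0 : 0 ∉ T) (hT : (T : Set E).Pairwise fun u v ↦ ⟪u, v⟫ ≤ 0)
    (hv₀T : ∀ v ∈ T, ⟪v₀, v⟫ ≤ 0) :
    #(T.filter ((ℝ ∙ v₀)ᗮ.orthogonalProjectionOnto · = 0)) ≤ 1 := by
  refine card_le_one.mpr fun u hu v hv ↦ by_contra fun huv ↦ ?_
  obtain ⟨huT, hPu⟩ := mem_filter.mp hu
  obtain ⟨hvT, hPv⟩ := mem_filter.mp hv
  exact (hT huT hvT huv).not_gt <| inner_pos_of_orthogonalProjectionOnto_singleton_eq_zero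
    (ne_of_mem_of_not_mem huT hT0) (ne_of_mem_of_not_mem hvT hT0) (hv₀T u huT) (hv₀T v hvT) hPu hPv

theorem Finset.card_le_two_mul_finrank_of_pairwise_inner_nonpos [FiniteDimensional ℝ E]
    (S : Finset E) (h0 : 0 ∉ S) (hS : (S : Set E).Pairwise fun u v ↦ ⟪u, v⟫ ≤ 0) :
    #S ≤ 2 * finrank ℝ E := by
  induction hd : finrank ℝ E generalizing E with
  | zero =>
    have : Subsingleton E := finrank_zero_iff.mp hd
    rw [Nat.mul_zero, Nat.le_zero, card_eq_zero, eq_empty_iff_forall_notMem]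
    exact fun v hv ↦ h0 (Subsingleton.elim v 0 ▸ hv)
  | succ d ih =>
    classical
    obtain rfl | ⟨v₀, hv₀⟩ := S.eq_empty_or_nonempty
    · simp
    set P := (ℝ ∙ v₀)ᗮ.orthogonalProjectionOnto
    set T := S.erase v₀
    have hT : (T : Set E).Pairwise fun u v ↦ ⟪u, v⟫ ≤ 0 :=
      hS.mono (coe_erase v₀ S ▸ Set.sdiff_subset)
    have hv₀T : ∀ v ∈ T, ⟪v₀, v⟫ ≤ 0 := fun v hv ↦
      hS hv₀ (mem_of_mem_erase hv) (ne_of_mem_erase hv).symm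
    have hker : #(T.filter (P · = 0)) ≤ 1 :=
      card_filter_orthogonalProjectionOnto_singleton_eq_zero_le_one
        (fun h ↦ h0 (mem_of_mem_erase h)) hT hv₀T
    have hrest : #(T.filter (¬P · = 0)) ≤ 2 * d := by
      have hsub : (↑(T.filter (¬P · = 0)) : Set E) ⊆ T := coe_subset.mpr (filter_subset _ T)
      have hPT := (hT.mono hsub).inner_orthogonalProjectionOnto_singleton_nonpos
        fun v hv ↦ hv₀T v (hsub hv)
      have hinj := hPT.injOn_of_inner_nonpos fun v hv ↦ (mem_filter.mp hv).2
      have h0P : 0 ∉ (T.filter (¬P · = 0)).image P := fun h ↦ by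
        obtain ⟨v, hv, hPv⟩ := mem_image.mp h
        exact (mem_filter.mp hv).2 hPv
      have : Fact (finrank ℝ E = d + 1) := ⟨hd⟩
      rw [← card_image_of_injOn hinj]
      refine ih _ h0P ?_
        (Submodule.finrank_orthogonal_span_singleton (ne_of_mem_of_not_mem hv₀ h0))
      rwa [coe_image, hinj.pairwise_image]
    rw [← card_erase_add_one hv₀, ← card_filter_add_card_filter_not (s := T) (P · = 0)]
    omega

end

/-- At most 12 pure product two-qubit states can be pairwise perfectly
distinguished in the minimal (SEP) composition: any family of pairs of unit
Bloch vectors with pairwise `nᵢ·nⱼ + mᵢ·mⱼ ≤ 0` has at most 12 members. -/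
theorem sep_pairwise_distinguishable_card_le_twelve
    (S : Finset (EuclideanSpace ℝ (Fin 3) × EuclideanSpace ℝ (Fin 3)))
    (hunit : ∀ p ∈ S, ‖p.1‖ = 1 ∧ ‖p.2‖ = 1)
    (hdist : ∀ p ∈ S, ∀ q ∈ S, p ≠ q → ⟪p.1, q.1⟫ + ⟪p.2, q.2⟫ ≤ 0) :
    S.card ≤ 12 := by
  classical
  let V := EuclideanSpace ℝ (Fin 3) × EuclideanSpace ℝ (Fin 3)
  have hinj : Function.Injective (WithLp.toLp 2 : V → WithLp 2 V) := WithLp.toLp_injective 2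
  have hrank : finrank ℝ (WithLp 2 V) = 6 := by
    rw [(WithLp.linearEquiv 2 ℝ V).finrank_eq, finrank_prod, finrank_euclideanSpace_fin]
  have h0 : 0 ∉ S.image (WithLp.toLp 2) := fun h ↦ by
    obtain ⟨p, hp, hp0⟩ := mem_image.mp h
    have : p = 0 := hinj hp0
    simpa [this] using (hunit p hp).1
  have hS : (↑(S.image (WithLp.toLp 2)) : Set (WithLp 2 V)).Pairwise fun u v ↦ ⟪u, v⟫ ≤ 0 := by
    rw [coe_image, hinj.injOn.pairwise_image]
    exact fun p hp q hq hpq ↦ hdist p hp q hq hpq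
  calc #S = #(S.image (WithLp.toLp 2)) := (card_image_of_injective S hinj).symm
    _ ≤ 2 * finrank ℝ (WithLp 2 V) := card_le_two_mul_finrank_of_pairwise_inner_nonpos _ h0 hS
    _ = 12 := by rw [hrank]
end
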